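/- arXiv:1911.02394 — 5 statements merged into one kernel-verified Lean document; each statement's English description precedes it below -/
import Mathlib

section
/- For all integers m ≥ 3 and k ≥ 1 such that it is not the case that m = 5 and k ∈ {2, 3, 5}, and not the case that m = 7 and k = 3, the double Roman domination number of the graph C_{m,k} satisfies γ_dR(C_{m,k}) ≤ 12(m+k)/11. -/
/-- A double Roman dominating function on a simple graph `G`:
values in `{0,1,2,3}`, every vertex with value `0` has two neighbors with value `2`
or one neighbor with value `3`, and every vertex with value `1` has a neighbor with
value at least `2`. -/
def IsDRDF {V : Type*} (G : SimpleGraph V) (f : V → ℕ) : Prop :=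
  (∀ v, f v ≤ 3) ∧
  (∀ v, f v = 0 →
    (∃ u w, u ≠ w ∧ G.Adj v u ∧ G.Adj v w ∧ f u = 2 ∧ f w = 2) ∨ ∃ u, G.Adj v u ∧ f u = 3) ∧
  (∀ v, f v = 1 → ∃ u, G.Adj v u ∧ 2 ≤ f u)

/-- The double Roman domination number: the minimum weight of a DRDF. -/
noncomputable def gammaDR {V : Type*} [Fintype V] (G : SimpleGraph V) : ℕ :=
  sInf {w | ∃ f, IsDRDF G f ∧ ∑ v, f v = w}

/-- Base relation for the graph `C_{m,k}`: a cycle `x_1 ⋯ x_m x_1` (here `Fin m`, with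
`x_1` being `0`), a path `y_1 ⋯ y_k` (here `Fin k`, with `y_1` being `0` and `y_k` being
`k-1`), together with the edge `x_1 y_1`. -/
def cmkR (m k : ℕ) : (Fin m ⊕ Fin k) → (Fin m ⊕ Fin k) → Prop
  | .inl u, .inl v => (u.val + 1) % m = v.val
  | .inr i, .inr j => i.val + 1 = j.val
  | .inl u, .inr j => u.val = 0 ∧ j.val = 0
  | .inr _, .inl _ => False

/-- The graph `C_{m,k}`. -/
def Cmk (m k : ℕ) : SimpleGraph (Fin m ⊕ Fin k) := SimpleGraph.fromRel (cmkR m k)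

/-!
Label the cycle `3, 0, 0, 3, 0, 0, …` starting at `x_1` and the path `0, 0, 3, 0, 0, 3, …`
starting at `y_1`, so that every `0` has a neighbour labelled `3`; a leftover end is fixed with a
single `2` (at `x_{m-1}` when `m ≡ 1 mod 3`, at `y_k` when `k ≡ 2 mod 3`). This costs
`m + k + 1`, and only `m + k` when `m ≡ 0` or `k ≡ 1 mod 3`, which is at most `12(m+k)/11` as
soon as `m + k ≥ 11`. The finitely many smaller graphs not excluded are covered by explicit
labellings.
-/

open Finset

lemma gammaDR_le_sum {V : Type*} [Fintype V] {G : SimpleGraph V} {f : V → ℕ} (hf : IsDRDF G f) :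
    gammaDR G ≤ ∑ v, f v :=
  Nat.sInf_le ⟨f, hf, rfl⟩

lemma isDRDF_of_forall_eq_zero_adj_three {V : Type*} {G : SimpleGraph V} {f : V → ℕ}
    (hf : ∀ v, f v = 0 ∨ f v = 2 ∨ f v = 3) (hzero : ∀ v, f v = 0 → ∃ u, G.Adj v u ∧ f u = 3) :
    IsDRDF G f := by
  refine ⟨fun v => ?_, fun v hv => Or.inr (hzero v hv), fun v hv => ?_⟩
  · rcases hf v with h | h | h <;> omega
  · rcases hf v with h | h | h <;> omega

instance {V : Type*} [Fintype V] [DecidableEq V] (G : SimpleGraph V) [DecidableRel G.Adj] :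
    DecidablePred (IsDRDF G) := fun f => by
  unfold IsDRDF
  infer_instance

lemma sum_range_ite_mod_three (n r : ℕ) (hr : r < 3) :
    ∑ i ∈ range n, (if i % 3 = r then 3 else 0) = 3 * ((n + 2 - r) / 3) := by
  induction n with
  | zero => rw [sum_range_zero]; omega
  | succ n ih =>
    rw [sum_range_succ, ih]
    split_ifs <;> omega

section Cmk

instance (m k : ℕ) : DecidableRel (cmkR m k)
  | .inl u, .inl v => inferInstanceAs (Decidable ((u.val + 1) % m = v.val))
  | .inr i, .inr j => inferInstanceAs (Decidable (i.val + 1 = j.val))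
  | .inl u, .inr j => inferInstanceAs (Decidable (u.val = 0 ∧ j.val = 0))
  | .inr _, .inl _ => inferInstanceAs (Decidable False)

instance (m k : ℕ) : DecidableRel (Cmk m k).Adj := fun a b =>
  decidable_of_iff _ (SimpleGraph.fromRel_adj (cmkR m k) a b).symm

variable {m k : ℕ}

lemma cmk_adj_inl {i j : Fin m} (hm : 2 ≤ m) (h : (i.val + 1) % m = j ∨ (j.val + 1) % m = i) :
    (Cmk m k).Adj (.inl i) (.inl j) := by
  have hlt := i.isLt
  refine (SimpleGraph.fromRel_adj _ _ _).2 ⟨fun hij => ?_, h⟩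
  cases Sum.inl.inj hij
  rcases (show i.val + 1 < m ∨ i.val + 1 = m by omega) with hi | hi
  · rw [Nat.mod_eq_of_lt hi, or_self] at h
    omega
  · rw [hi, Nat.mod_self, or_self] at h
    omega

lemma cmk_adj_inr {s t : Fin k} (h : s.val + 1 = t ∨ t.val + 1 = s) :
    (Cmk m k).Adj (.inr s) (.inr t) :=
  (SimpleGraph.fromRel_adj _ _ _).2 ⟨fun hst => by cases Sum.inr.inj hst; omega, h⟩

lemma cmk_adj_inl_inr {i : Fin m} {t : Fin k} (hi : i.val = 0) (ht : t.val = 0) :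
    (Cmk m k).Adj (.inl i) (.inr t) :=
  (SimpleGraph.fromRel_adj _ _ _).2 ⟨Sum.inl_ne_inr, .inl ⟨hi, ht⟩⟩

def cycleLabel (m i : ℕ) : ℕ :=
  if i % 3 = 0 ∧ i + 1 < m then 3 else if i + 2 = m ∧ m % 3 = 1 then 2 else 0

def pathLabel (k t : ℕ) : ℕ :=
  if t % 3 = 2 then 3 else if t + 1 = k ∧ k % 3 = 2 then 2 else 0

def cmkLabel (m k : ℕ) : Fin m ⊕ Fin k → ℕ :=
  Sum.elim (fun i => cycleLabel m i) (fun t => pathLabel k t)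

lemma cycleLabel_mem (m i : ℕ) : cycleLabel m i = 0 ∨ cycleLabel m i = 2 ∨ cycleLabel m i = 3 := by
  unfold cycleLabel
  split_ifs <;> simp

lemma pathLabel_mem (k t : ℕ) : pathLabel k t = 0 ∨ pathLabel k t = 2 ∨ pathLabel k t = 3 := by
  unfold pathLabel
  split_ifs <;> simp

lemma cycleLabel_zero (hm : 2 ≤ m) : cycleLabel m 0 = 3 := by
  simp [cycleLabel, show 1 < m by omega]

lemma exists_cycleLabel_eq_three_of_eq_zero {i : ℕ} (hm : 2 ≤ m) (hi : i < m)
    (h : cycleLabel m i = 0) :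
    ∃ j < m, ((i + 1) % m = j ∨ (j + 1) % m = i) ∧ cycleLabel m j = 3 := by
  unfold cycleLabel at h ⊢
  rcases (show i + 1 < m ∨ i + 1 = m by omega) with hi' | hi'
  · by_cases h1 : i % 3 = 1
    · refine ⟨i - 1, by omega, .inr ?_, ?_⟩
      · rw [Nat.sub_add_cancel (by omega), Nat.mod_eq_of_lt hi]
      · split_ifs at h ⊢ <;> omega
    · refine ⟨i + 1, hi', .inl (Nat.mod_eq_of_lt hi'), ?_⟩
      split_ifs at h ⊢ <;> omega
  · refine ⟨0, by omega, .inl (by rw [hi', Nat.mod_self]), ?_⟩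
    split_ifs <;> omega

lemma exists_pathLabel_eq_three_of_eq_zero {t : ℕ} (ht : t < k) (ht0 : t ≠ 0)
    (h : pathLabel k t = 0) :
    ∃ s < k, (t + 1 = s ∨ s + 1 = t) ∧ pathLabel k s = 3 := by
  unfold pathLabel at h ⊢
  by_cases h0 : t % 3 = 0
  · exact ⟨t - 1, by omega, .inr (by omega), if_pos (by omega)⟩
  · split_ifs at h
    exact ⟨t + 1, by omega, .inl rfl, if_pos (by omega)⟩

lemma isDRDF_cmkLabel (hm : 3 ≤ m) : IsDRDF (Cmk m k) (cmkLabel m k) := by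
  refine isDRDF_of_forall_eq_zero_adj_three ?_ ?_
  · rintro (i | t)
    exacts [cycleLabel_mem m i, pathLabel_mem k t]
  · rintro (i | t) h
    · obtain ⟨j, hj, hadj, h3⟩ := exists_cycleLabel_eq_three_of_eq_zero (by omega) i.isLt h
      exact ⟨.inl ⟨j, hj⟩, cmk_adj_inl (by omega) hadj, h3⟩
    · by_cases ht : t.val = 0
      · exact ⟨.inl ⟨0, by omega⟩, (cmk_adj_inl_inr rfl ht).symm, cycleLabel_zero (by omega)⟩
      · obtain ⟨s, hs, hadj, h3⟩ := exists_pathLabel_eq_three_of_eq_zero t.isLt ht h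
        exact ⟨.inr ⟨s, hs⟩, cmk_adj_inr hadj, h3⟩

lemma sum_range_cycleLabel (hm : 3 ≤ m) :
    ∑ i ∈ range m, cycleLabel m i = if m % 3 = 0 then m else m + 1 := by
  by_cases h1 : m % 3 = 1
  · obtain ⟨a, rfl⟩ : ∃ a, m = a + 2 := ⟨m - 2, by omega⟩
    have hinit : ∀ i ∈ range a, cycleLabel (a + 2) i = if i % 3 = 0 then 3 else 0 := by
      intro i hi
      have := mem_range.1 hi
      unfold cycleLabel
      split_ifs <;> omega
    rw [sum_range_succ, sum_range_succ, sum_congr rfl hinit, sum_range_ite_mod_three a 0 (by norm_num)]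
    unfold cycleLabel
    split_ifs <;> omega
  · have hall : ∀ i ∈ range m, cycleLabel m i = if i % 3 = 0 then 3 else 0 := by
      intro i hi
      have := mem_range.1 hi
      unfold cycleLabel
      split_ifs <;> omega
    rw [sum_congr rfl hall, sum_range_ite_mod_three m 0 (by norm_num)]
    split_ifs <;> omega

lemma sum_range_pathLabel (k : ℕ) :
    ∑ t ∈ range k, pathLabel k t = if k % 3 = 1 then k - 1 else k := by
  by_cases h2 : k % 3 = 2
  · obtain ⟨a, rfl⟩ : ∃ a, k = a + 1 := ⟨k - 1, by omega⟩
    have hinit : ∀ t ∈ range a, pathLabel (a + 1) t = if t % 3 = 2 then 3 else 0 := by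
      intro t ht
      have := mem_range.1 ht
      unfold pathLabel
      split_ifs <;> omega
    rw [sum_range_succ, sum_congr rfl hinit, sum_range_ite_mod_three a 2 (by norm_num)]
    unfold pathLabel
    split_ifs <;> omega
  · have hall : ∀ t ∈ range k, pathLabel k t = if t % 3 = 2 then 3 else 0 := by
      intro t _
      unfold pathLabel
      split_ifs <;> omega
    rw [sum_congr rfl hall, sum_range_ite_mod_three k 2 (by norm_num)]
    split_ifs <;> omega

lemma gammaDR_cmk_le_weight (hm : 3 ≤ m) :
    gammaDR (Cmk m k) ≤ (if m % 3 = 0 then m else m + 1) + (if k % 3 = 1 then k - 1 else k) := by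
  calc gammaDR (Cmk m k) ≤ ∑ v, cmkLabel m k v := gammaDR_le_sum (isDRDF_cmkLabel hm)
    _ = _ := by
      rw [Fintype.sum_sum_type, cmkLabel]
      simp only [Sum.elim_inl, Sum.elim_inr]
      rw [Fin.sum_univ_eq_sum_range (cycleLabel m) m, Fin.sum_univ_eq_sum_range (pathLabel k) k,
        sum_range_cycleLabel hm, sum_range_pathLabel k]

end Cmk

lemma gammaDR_cmk_4_2 : gammaDR (Cmk 4 2) ≤ 6 :=
  (gammaDR_le_sum (f := Sum.elim ![0, 0, 3, 0] ![3, 0]) (by decide)).trans (by decide)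

lemma gammaDR_cmk_4_3 : gammaDR (Cmk 4 3) ≤ 7 :=
  (gammaDR_le_sum (f := Sum.elim ![0, 2, 0, 2] ![0, 3, 0]) (by decide)).trans (by decide)

lemma gammaDR_cmk_4_5 : gammaDR (Cmk 4 5) ≤ 9 :=
  (gammaDR_le_sum (f := Sum.elim ![0, 0, 3, 0] ![3, 0, 0, 3, 0]) (by decide)).trans (by decide)

lemma gammaDR_cmk_4_6 : gammaDR (Cmk 4 6) ≤ 10 :=
  (gammaDR_le_sum (f := Sum.elim ![0, 2, 0, 2] ![0, 3, 0, 0, 3, 0]) (by decide)).trans (by decide)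

lemma gammaDR_cmk_7_2 : gammaDR (Cmk 7 2) ≤ 9 :=
  (gammaDR_le_sum (f := Sum.elim ![0, 0, 3, 0, 0, 3, 0] ![3, 0]) (by decide)).trans (by decide)

lemma gammaDR_cmk_8_2 : gammaDR (Cmk 8 2) ≤ 10 :=
  (gammaDR_le_sum (f := Sum.elim ![2, 0, 2, 0, 2, 0, 2, 0] ![0, 2]) (by decide)).trans (by decide)

/-- For all integers `m ≥ 3`, `k ≥ 1` avoiding the excluded cases
(`m = 5` with `k ∈ {2,3,5}`, and `m = 7` with `k = 3`),
`γ_dR(C_{m,k}) ≤ 12(m+k)/11`. -/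
theorem gammaDR_Cmk_le (m k : ℕ) (hm : 3 ≤ m) (hk : 1 ≤ k)
    (h5 : ¬ (m = 5 ∧ (k = 2 ∨ k = 3 ∨ k = 5))) (h7 : ¬ (m = 7 ∧ k = 3)) :
    (gammaDR (Cmk m k) : ℚ) ≤ 12 * (m + k) / 11 := by
  have hlabel := gammaDR_cmk_le_weight (k := k) hm
  have key : 11 * gammaDR (Cmk m k) ≤ 12 * (m + k) := by
    by_cases hlarge : 11 ≤ m + k ∨ m % 3 = 0 ∨ k % 3 = 1
    · split_ifs at hlabel <;> omega
    · have := gammaDR_cmk_4_2; have := gammaDR_cmk_4_3; have := gammaDR_cmk_4_5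
      have := gammaDR_cmk_4_6; have := gammaDR_cmk_7_2; have := gammaDR_cmk_8_2
      have hm9 : m ≤ 9 := by omega
      have hk7 : k ≤ 7 := by omega
      interval_cases m <;> interval_cases k <;> omega
  rw [le_div_iff₀ (by norm_num), mul_comm]
  exact_mod_cast key
end

section
/- Let H be a connected simple graph with minimum degree at least 2 satisfying γ_dR(H) ≤ 12·n(H)/11, and let u ∈ V(H). If G is the graph obtained from the disjoint union of H and a cycle C_m = x_1x_2⋯x_mx_1 with m ∉ {5, 7}, by adding the edge u x_1, then γ_dR(G) ≤ 12·n(G)/11. -/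
/-- Base relation for the graph obtained from the disjoint union of `H` and the cycle
`C_m = x_1 x_2 ⋯ x_m x_1` (on `Fin m`, with `x_1` being `0`) by adding the edge
`u x_1`. -/
def joinCycleR {V : Type*} (H : SimpleGraph V) (u : V) (m : ℕ) :
    (V ⊕ Fin m) → (V ⊕ Fin m) → Prop
  | .inl a, .inl b => H.Adj a b
  | .inr a, .inr b => (a.val + 1) % m = b.val
  | .inl a, .inr x => a = u ∧ x.val = 0
  | .inr _, .inl _ => False

/-- The graph obtained from the disjoint union of `H` and the cycle `C_m` by adding
the edge `u x_1`. -/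
def joinCycle {V : Type*} (H : SimpleGraph V) (u : V) (m : ℕ) :
    SimpleGraph (V ⊕ Fin m) :=
  SimpleGraph.fromRel (joinCycleR H u m)

open Finset SimpleGraph

section DRDF

variable {V W : Type*}

theorem IsDRDF.mono {G G' : SimpleGraph V} (h : G ≤ G') {f : V → ℕ} (hf : IsDRDF G f) :
    IsDRDF G' f := by
  obtain ⟨hle, hzero, hone⟩ := hf
  refine ⟨hle, fun v hv => ?_, fun v hv => ?_⟩
  · rcases hzero v hv with ⟨a, b, hab, ha, hb, ha2, hb2⟩ | ⟨a, ha, ha3⟩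
    · exact Or.inl ⟨a, b, hab, h ha, h hb, ha2, hb2⟩
    · exact Or.inr ⟨a, h ha, ha3⟩
  · obtain ⟨a, ha, ha2⟩ := hone v hv
    exact ⟨a, h ha, ha2⟩

theorem IsDRDF.sumElim {G : SimpleGraph V} {H : SimpleGraph W} {f : V → ℕ} {g : W → ℕ}
    (hf : IsDRDF G f) (hg : IsDRDF H g) : IsDRDF (G ⊕g H) (Sum.elim f g) := by
  refine ⟨Sum.rec hf.1 hg.1, ?_, ?_⟩
  · rintro (v | w) hv
    · rcases hf.2.1 v hv with ⟨a, b, hab, ha, hb, ha2, hb2⟩ | ⟨a, ha, ha3⟩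
      · exact Or.inl ⟨.inl a, .inl b, by simpa using hab, ha, hb, ha2, hb2⟩
      · exact Or.inr ⟨.inl a, ha, ha3⟩
    · rcases hg.2.1 w hv with ⟨a, b, hab, ha, hb, ha2, hb2⟩ | ⟨a, ha, ha3⟩
      · exact Or.inl ⟨.inr a, .inr b, by simpa using hab, ha, hb, ha2, hb2⟩
      · exact Or.inr ⟨.inr a, ha, ha3⟩
  · rintro (v | w) hv
    · obtain ⟨a, ha, ha2⟩ := hf.2.2 v hv
      exact ⟨.inl a, ha, ha2⟩
    · obtain ⟨a, ha, ha2⟩ := hg.2.2 w hv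
      exact ⟨.inr a, ha, ha2⟩

theorem isDRDF_const_three (G : SimpleGraph V) : IsDRDF G fun _ => 3 := by
  refine ⟨fun _ => le_rfl, ?_, ?_⟩ <;> simp

variable [Fintype V] [Fintype W]

theorem gammaDR_le {G : SimpleGraph V} {f : V → ℕ} (hf : IsDRDF G f) :
    gammaDR G ≤ ∑ v, f v :=
  Nat.sInf_le ⟨f, hf, rfl⟩

theorem exists_isDRDF_sum_eq_gammaDR (G : SimpleGraph V) :
    ∃ f, IsDRDF G f ∧ ∑ v, f v = gammaDR G :=
  Nat.sInf_mem (s := {w | ∃ f, IsDRDF G f ∧ ∑ v, f v = w})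
    ⟨_, _, isDRDF_const_three G, rfl⟩

theorem gammaDR_anti {G G' : SimpleGraph V} (h : G ≤ G') : gammaDR G' ≤ gammaDR G := by
  obtain ⟨f, hf, hw⟩ := exists_isDRDF_sum_eq_gammaDR G
  exact hw ▸ gammaDR_le (hf.mono h)

theorem gammaDR_sum_le (G : SimpleGraph V) (H : SimpleGraph W) :
    gammaDR (G ⊕g H) ≤ gammaDR G + gammaDR H := by
  obtain ⟨f, hf, hfw⟩ := exists_isDRDF_sum_eq_gammaDR G
  obtain ⟨g, hg, hgw⟩ := exists_isDRDF_sum_eq_gammaDR H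
  calc gammaDR (G ⊕g H) ≤ ∑ x, Sum.elim f g x := gammaDR_le (hf.sumElim hg)
    _ = gammaDR G + gammaDR H := by rw [Fintype.sum_sum_type, ← hfw, ← hgw]; rfl

end DRDF

section Cycle

theorem sum_range_ite_mod_two_eq_zero (m : ℕ) :
    ∑ i ∈ range m, (if i % 2 = 0 then 2 else 0) = 2 * ((m + 1) / 2) := by
  induction m with
  | zero => rfl
  | succ m ih => rw [sum_range_succ, ih]; split_ifs <;> omega

theorem sum_range_ite_mod_three_eq_one (m : ℕ) :
    ∑ i ∈ range m, (if i % 3 = 1 then 3 else 0) = 3 * ((m + 1) / 3) := by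
  induction m with
  | zero => rfl
  | succ m ih => rw [sum_range_succ, ih]; split_ifs <;> omega

theorem isDRDF_cycleGraph_alternating (n : ℕ) :
    IsDRDF (cycleGraph (n + 3)) fun i => if i.val % 2 = 0 then 2 else 0 := by
  refine ⟨fun i => by dsimp only; split_ifs <;> omega, fun i hi => Or.inl ?_,
    fun i hi => by dsimp only at hi; split_ifs at hi; omega⟩
  have hodd : i.val % 2 = 1 := by dsimp only at hi; split_ifs at hi; omega
  have hpred : (i - 1).val = i.val - 1 := Fin.val_sub_one_of_ne_zero fun h => by simp [h] at hodd
  have hsucc : (i + 1).val = if i.val = n + 2 then 0 else i.val + 1 := by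
    simp [Fin.val_add_one, Fin.ext_iff]
  refine ⟨i - 1, i + 1, fun h => ?_, cycleGraph_adj.2 (Or.inl (sub_sub_cancel i 1)),
    cycleGraph_adj.2 (Or.inr (add_sub_cancel_left i 1)), ?_, ?_⟩
  · have := congrArg Fin.val h
    split_ifs at hsucc <;> omega
  · simp only [hpred]; split_ifs <;> omega
  · simp only [hsucc]; split_ifs <;> omega

theorem isDRDF_cycleGraph_everyThird (n : ℕ) (hn : 3 ∣ n) :
    IsDRDF (cycleGraph (n + 3)) fun i => if i.val % 3 = 1 then 3 else 0 := by
  refine ⟨fun i => by dsimp only; split_ifs <;> omega, fun i hi => Or.inr ?_,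
    fun i hi => by dsimp only at hi; split_ifs at hi; omega⟩
  have hne : i.val % 3 ≠ 1 := by dsimp only at hi; split_ifs at hi; omega
  rcases (by omega : i.val % 3 = 0 ∨ i.val % 3 = 2) with h | h
  · have hsucc : (i + 1).val = i.val + 1 := Fin.val_add_one_of_lt' (by have := i.isLt; omega)
    refine ⟨i + 1, cycleGraph_adj.2 (Or.inr (add_sub_cancel_left i 1)), ?_⟩
    simp only [hsucc]; split_ifs <;> omega
  · have hpred : (i - 1).val = i.val - 1 := Fin.val_sub_one_of_ne_zero fun h0 => by simp [h0] at h
    refine ⟨i - 1, cycleGraph_adj.2 (Or.inl (sub_sub_cancel i 1)), ?_⟩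
    simp only [hpred]; split_ifs <;> omega

theorem gammaDR_cycleGraph_le {m : ℕ} (hm : 3 ≤ m) (hm5 : m ≠ 5) (hm7 : m ≠ 7) :
    11 * gammaDR (cycleGraph m) ≤ 12 * m := by
  obtain ⟨n, rfl⟩ : ∃ n, m = n + 3 := ⟨m - 3, by omega⟩
  by_cases h3 : 3 ∣ n
  · have := gammaDR_le (isDRDF_cycleGraph_everyThird n h3)
    rw [Fin.sum_univ_eq_sum_range (fun i => if i % 3 = 1 then 3 else 0),
      sum_range_ite_mod_three_eq_one] at this
    omega
  · have := gammaDR_le (isDRDF_cycleGraph_alternating n)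
    rw [Fin.sum_univ_eq_sum_range (fun i => if i % 2 = 0 then 2 else 0),
      sum_range_ite_mod_two_eq_zero] at this
    omega

end Cycle

theorem sum_cycleGraph_le_joinCycle {V : Type*} (H : SimpleGraph V) (u : V) (m : ℕ) :
    H ⊕g cycleGraph m ≤ joinCycle H u m := by
  rintro (a | i) (b | j) h
  · exact (fromRel_adj _ _ _).2 ⟨by simpa using h.ne, Or.inl h⟩
  · simp at h
  · simp at h
  · refine (fromRel_adj _ _ _).2 ⟨by simpa using h.ne, ?_⟩
    have := NeZero.of_pos i.pos
    rcases cycleGraph_adj'.1 h with h | h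
    · right; show (j.val + 1) % m = i.val
      rw [← h, ← Fin.val_add, add_sub_cancel]
    · left; show (i.val + 1) % m = j.val
      rw [← h, ← Fin.val_add, add_sub_cancel]

theorem gammaDR_joinCycle_le_general {V : Type*} [Fintype V] (H : SimpleGraph V)
    (hH : (gammaDR H : ℚ) ≤ 12 * (Fintype.card V) / 11)
    (u : V) (m : ℕ) (hm : 3 ≤ m) (hm5 : m ≠ 5) (hm7 : m ≠ 7) :
    (gammaDR (joinCycle H u m) : ℚ) ≤ 12 * (Fintype.card (V ⊕ Fin m)) / 11 := by
  have hG : (gammaDR (joinCycle H u m) : ℚ) ≤ gammaDR H + gammaDR (cycleGraph m) := by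
    exact_mod_cast (gammaDR_anti (sum_cycleGraph_le_joinCycle H u m)).trans
      (gammaDR_sum_le H (cycleGraph m))
  have hC : (11 * gammaDR (cycleGraph m) : ℚ) ≤ 12 * m := by
    exact_mod_cast gammaDR_cycleGraph_le hm hm5 hm7
  rw [Fintype.card_sum, Fintype.card_fin, Nat.cast_add]
  linarith

/-- If `H` is a connected graph with minimum degree at least `2` satisfying
`γ_dR(H) ≤ 12 n(H) / 11`, `u ∈ V(H)`, and `G` is obtained from the disjoint union of
`H` and a cycle `C_m` with `m ∉ {5,7}` by adding the edge `u x_1`, then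
`γ_dR(G) ≤ 12 n(G) / 11`. -/
theorem gammaDR_joinCycle_le {V : Type*} [Fintype V] (H : SimpleGraph V)
    (hconn : H.Connected) (hdeg : ∀ v, 2 ≤ {w | H.Adj v w}.ncard)
    (hH : (gammaDR H : ℚ) ≤ 12 * (Fintype.card V) / 11)
    (u : V) (m : ℕ) (hm : 3 ≤ m) (hm5 : m ≠ 5) (hm7 : m ≠ 7) :
    (gammaDR (joinCycle H u m) : ℚ) ≤ 12 * (Fintype.card (V ⊕ Fin m)) / 11 :=
  gammaDR_joinCycle_le_general H hH u m hm hm5 hm7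
end

section
/- For every simple graph G, there exists a double Roman dominating function of G of minimum weight γ_dR(G) that assigns the value 1 to no vertex. -/
/-!
Take a minimum-weight double Roman dominating function with as few `1`s as possible and suppose
`f v = 1`. Then `v` has a neighbour `u` with `f u ≥ 2`; setting `v` to `0` and `u` to `3` is again
a DRDF. If `f u = 3` this lowers the weight, contradicting minimality; if `f u = 2` it keeps the
weight and removes a `1`, contradicting the choice of `f`.
-/

open Finset Function

theorem Fintype.sum_update_add_apply {ι M : Type*} [Fintype ι] [DecidableEq ι]
    [AddCommMonoid M] (f : ι → M) (i : ι) (b : M) :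
    ∑ j, update f i b j + f i = ∑ j, f j + b := by
  rw [sum_update_of_mem (mem_univ i), ← add_sum_erase univ f (mem_univ i), sdiff_singleton_eq_erase]
  abel

namespace IsDRDF

variable {V : Type*} {G : SimpleGraph V} {f g : V → ℕ}

theorem of_raise (hf : IsDRDF G f) (hg3 : ∀ w, g w ≤ 3) (hraise : ∀ w, 2 ≤ f w → f w ≤ g w)
    (hone : ∀ w, g w = 1 → f w = 1)
    (hzero : ∀ w, g w = 0 → f w = 0 ∨ ∃ u, G.Adj w u ∧ g u = 3) : IsDRDF G g := by
  obtain ⟨-, hf0, hf1⟩ := hf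
  refine ⟨hg3, fun w hw => ?_, fun w hw => ?_⟩
  · obtain hw | hw3 := hzero w hw
    · obtain ⟨a, b, hab, ha, hb, ha2, hb2⟩ | ⟨c, hc, hc3⟩ := hf0 w hw
      · have := hraise a ha2.ge; have := hraise b hb2.ge; have := hg3 a; have := hg3 b
        obtain hga | hga := (by omega : g a = 2 ∨ g a = 3)
        · obtain hgb | hgb := (by omega : g b = 2 ∨ g b = 3)
          · exact Or.inl ⟨a, b, hab, ha, hb, hga, hgb⟩
          · exact Or.inr ⟨b, hb, hgb⟩
        · exact Or.inr ⟨a, ha, hga⟩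
      · have := hraise c (by omega)
        exact Or.inr ⟨c, hc, le_antisymm (hg3 c) (by omega)⟩
    · exact Or.inr hw3
  · obtain ⟨u, hu, hu2⟩ := hf1 w (hone w hw)
    exact ⟨u, hu, hu2.trans (hraise u hu2)⟩

section Update

variable [DecidableEq V] {u v : V}

theorem update_three_update_zero (hf : IsDRDF G f) (hv : f v = 1) (hvu : G.Adj v u) :
    IsDRDF G (update (update f u 3) v 0) := by
  have huv : u ≠ v := hvu.ne.symm
  refine hf.of_raise (fun w => ?_) (fun w hw => ?_) (fun w hw => ?_) (fun w hw => ?_) <;>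
    simp only [update_apply] at *
  · split_ifs <;> simp [hf.1 w]
  · have := hf.1 w
    split_ifs <;> simp_all
  · split_ifs at hw <;> simp_all
  · split_ifs at hw with hwv
    · exact Or.inr ⟨u, hwv ▸ hvu, by simp [huv]⟩
    · exact Or.inl hw

end Update

section Weight

variable [Fintype V]

theorem gammaDR_le_sum (hf : IsDRDF G f) : gammaDR G ≤ ∑ v, f v :=
  Nat.sInf_le ⟨f, hf, rfl⟩

theorem exists_sum_eq_gammaDR (G : SimpleGraph V) :
    ∃ f, IsDRDF G f ∧ ∑ v, f v = gammaDR G := by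
  have hconst : IsDRDF G fun _ => 3 := ⟨fun _ => le_rfl, by simp, by simp⟩
  exact Nat.sInf_mem (⟨_, _, hconst, rfl⟩ : {w | ∃ f, IsDRDF G f ∧ ∑ v, f v = w}.Nonempty)

theorem exists_sum_eq_gammaDR_card_one_lt (hf : IsDRDF G f) (hmin : ∑ w, f w = gammaDR G)
    {v : V} (hv : f v = 1) :
    ∃ g, IsDRDF G g ∧ ∑ w, g w = gammaDR G ∧ #{w | g w = 1} < #{w | f w = 1} := by
  classical
  obtain ⟨u, hvu, hu⟩ := hf.2.2 v hv
  have hg := hf.update_three_update_zero hv hvu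
  have hweight : ∑ w, update (update f u 3) v 0 w + 1 + f u = ∑ w, f w + 3 := by
    have h₁ := Fintype.sum_update_add_apply (update f u 3) v 0
    have h₂ := Fintype.sum_update_add_apply f u 3
    simp only [update_of_ne hvu.ne, hv] at h₁
    omega
  have hu2 : f u = 2 := by
    have := hg.gammaDR_le_sum
    have := hf.1 u
    omega
  refine ⟨_, hg, by omega, card_lt_card ?_⟩
  refine ssubset_iff_of_subset (fun w hw => ?_) |>.2 ⟨v, by simp [hv], by simp⟩
  simp only [mem_filter, mem_univ, true_and, update_apply] at hw ⊢
  split_ifs at hw <;> simp_all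

theorem exists_sum_eq_gammaDR_forall_ne_one (hf : IsDRDF G f) (hmin : ∑ w, f w = gammaDR G) :
    ∃ g, IsDRDF G g ∧ ∑ w, g w = gammaDR G ∧ ∀ v, g v ≠ 1 := by
  induction hn : #{w | f w = 1} using Nat.strong_induction_on generalizing f with
  | _ n ih =>
    by_cases h : ∃ v, f v = 1
    · obtain ⟨v, hv⟩ := h
      obtain ⟨g, hg, hgmin, hlt⟩ := hf.exists_sum_eq_gammaDR_card_one_lt hmin hv
      exact ih _ (hn ▸ hlt) hg hgmin rfl
    · exact ⟨f, hf, hmin, not_exists.1 h⟩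

end Weight

end IsDRDF

/-- For every graph `G` there is a DRDF of minimum weight `γ_dR(G)` that assigns the
value `1` to no vertex. -/
theorem exists_gammaDR_function_no_one {V : Type*} [Fintype V] (G : SimpleGraph V) :
    ∃ f, IsDRDF G f ∧ ∑ v, f v = gammaDR G ∧ ∀ v, f v ≠ 1 := by
  obtain ⟨f, hf, hmin⟩ := IsDRDF.exists_sum_eq_gammaDR G
  exact hf.exists_sum_eq_gammaDR_forall_ne_one hmin
end

section
/- For every connected simple graph G of order n with maximum degree Δ, γ_dR(G) ≤ 2n − 2Δ + 1. -/
namespace SimpleGraph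

variable {V : Type*} (G : SimpleGraph V)

theorem gammaDR_le_sum [Fintype V] {f : V → ℕ} (hf : IsDRDF G f) : gammaDR G ≤ ∑ v, f v :=
  Nat.sInf_le ⟨f, hf, rfl⟩

variable [DecidableEq V] [DecidableRel G.Adj]

def starDRDF (v : V) (u : V) : ℕ :=
  if u = v then 3 else if G.Adj v u then 0 else 2

theorem isDRDF_starDRDF (v : V) : IsDRDF G (G.starDRDF v) := by
  refine ⟨fun u => ?_, fun u hu => Or.inr ⟨v, ?_, by simp [starDRDF]⟩, fun u hu => ?_⟩
  · unfold starDRDF; split_ifs <;> omega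
  · unfold starDRDF at hu
    split_ifs at hu with huv hvu
    exact G.adj_symm hvu
  · unfold starDRDF at hu
    split_ifs at hu <;> omega

theorem starDRDF_add_two_mul_indicator (v u : V) :
    G.starDRDF v u + 2 * (if G.Adj v u then 1 else 0) = 2 + if u = v then 1 else 0 := by
  unfold starDRDF
  by_cases huv : u = v
  · subst huv; simp
  · by_cases hvu : G.Adj v u <;> simp [huv, hvu]

theorem sum_starDRDF_add_two_mul_degree [Fintype V] (v : V) :
    ∑ u, G.starDRDF v u + 2 * G.degree v = 2 * Fintype.card V + 1 := by
  have hdeg : G.degree v = ∑ u, if G.Adj v u then 1 else 0 := by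
    rw [Finset.sum_boole, ← card_neighborFinset_eq_degree, neighborFinset_eq_filter]
    rfl
  rw [hdeg, Finset.mul_sum, ← Finset.sum_add_distrib]
  simp_rw [starDRDF_add_two_mul_indicator]
  rw [Finset.sum_add_distrib, Finset.sum_ite_eq']
  simp [mul_comm]

end SimpleGraph

theorem gammaDR_le_of_maxDegree_general {V : Type*} [Fintype V] (G : SimpleGraph V)
    (Δ : ℕ)
    (hex : ∃ v, {w | G.Adj v w}.ncard = Δ) :
    gammaDR G ≤ 2 * Fintype.card V - 2 * Δ + 1 := by
  classical
  obtain ⟨v, rfl⟩ := hex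
  have hdeg : {w | G.Adj v w}.ncard = G.degree v := by
    rw [← G.card_neighborFinset_eq_degree, ← Set.ncard_coe_finset, G.coe_neighborFinset]
    rfl
  have hweight := G.sum_starDRDF_add_two_mul_degree v
  calc gammaDR G ≤ ∑ u, G.starDRDF v u := G.gammaDR_le_sum (G.isDRDF_starDRDF v)
    _ = 2 * Fintype.card V - 2 * {w | G.Adj v w}.ncard + 1 := by omega

/-- For every connected graph `G` of order `n` with maximum degree `Δ`,
`γ_dR(G) ≤ 2n - 2Δ + 1`. -/
theorem gammaDR_le_of_maxDegree {V : Type*} [Fintype V] (G : SimpleGraph V)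
    (hconn : G.Connected) (Δ : ℕ)
    (hub : ∀ v, {w | G.Adj v w}.ncard ≤ Δ)
    (hex : ∃ v, {w | G.Adj v w}.ncard = Δ) :
    gammaDR G ≤ 2 * Fintype.card V - 2 * Δ + 1 :=
  gammaDR_le_of_maxDegree_general G Δ hex
end

section
/- Let H be the graph obtained from two disjoint 5-cycles by adding a new vertex w joined by an edge to exactly one vertex of each 5-cycle (so H has 11 vertices). For any graph G, let G_H be the graph obtained from G by adding |V(G)| disjoint copies H_1, …, H_{|V(G)|} of H and identifying the vertex w_i of H_i with the i-th vertex of G. Then γ_dR(G_H) = 12·n(G_H)/11, where n(G_H) = 11·|V(G)| is the order of G_H. -/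
/-- The vertices that a copy of `H` (two disjoint `5`-cycles plus a new vertex `w`
joined to one vertex of each) contributes to `G_H` besides the identified vertex `w`:
the two `5`-cycles. -/
abbrev HTail : Type := Fin 5 ⊕ Fin 5

/-- Base relation for `G_H`: `G` itself together with, for every vertex `w` of `G`, a
copy of `H` whose special vertex is identified with `w`; in each copy, `w` is joined
to vertex `0` of each of the two `5`-cycles. -/
def ghR {W : Type} (G : SimpleGraph W) :
    (W ⊕ W × HTail) → (W ⊕ W × HTail) → Prop
  | .inl a, .inl b => G.Adj a b
  | .inl a, .inr (w, .inl x) => a = w ∧ x.val = 0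
  | .inl a, .inr (w, .inr x) => a = w ∧ x.val = 0
  | .inr (w, .inl x), .inr (w', .inl y) => w = w' ∧ (x.val + 1) % 5 = y.val
  | .inr (w, .inr x), .inr (w', .inr y) => w = w' ∧ (x.val + 1) % 5 = y.val
  | _, _ => False

/-- The graph `G_H` obtained from `G` by attaching at its `i`-th vertex a copy `H_i`
of `H`, identified at the special vertex `w_i`. -/
def GH {W : Type} (G : SimpleGraph W) : SimpleGraph (W ⊕ W × HTail) :=
  SimpleGraph.fromRel (ghR G)

open SimpleGraph

section DoubleRoman

variable {U V : Type*}

def DRDominatesAt (G : SimpleGraph V) (f : V → ℕ) (v : V) : Prop :=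
  (f v = 0 →
    (∃ u w, u ≠ w ∧ G.Adj v u ∧ G.Adj v w ∧ f u = 2 ∧ f w = 2) ∨
      ∃ u, G.Adj v u ∧ f u = 3) ∧
  (f v = 1 → ∃ u, G.Adj v u ∧ 2 ≤ f u)

variable {G : SimpleGraph V} {f : V → ℕ}

instance [Fintype V] [DecidableEq V] [DecidableRel G.Adj] (v : V) :
    Decidable (DRDominatesAt G f v) := by
  unfold DRDominatesAt; infer_instance

theorem isDRDF_iff : IsDRDF G f ↔ (∀ v, f v ≤ 3) ∧ ∀ v, DRDominatesAt G f v := by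
  simp only [IsDRDF, DRDominatesAt, forall_and]

theorem DRDominatesAt.comp {H : SimpleGraph U} {φ : U → V} {v : U} (h : DRDominatesAt G f (φ v))
    (hφ : ∀ u, G.Adj (φ v) u → 2 ≤ f u → ∃ a, H.Adj v a ∧ φ a = u) :
    DRDominatesAt H (f ∘ φ) v := by
  obtain ⟨h0, h1⟩ := h
  refine ⟨fun hv => ?_, fun hv => ?_⟩
  · rcases h0 hv with ⟨u, u', huu', hu, hu', hu2, hu'2⟩ | ⟨u, hu, hu3⟩
    · obtain ⟨a, ha, rfl⟩ := hφ u hu (by omega)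
      obtain ⟨a', ha', rfl⟩ := hφ u' hu' (by omega)
      exact Or.inl ⟨a, a', fun h => huu' (h ▸ rfl), ha, ha', hu2, hu'2⟩
    · obtain ⟨a, ha, rfl⟩ := hφ u hu (by omega)
      exact Or.inr ⟨a, ha, hu3⟩
  · obtain ⟨u, hu, hu2⟩ := h1 hv
    obtain ⟨a, ha, rfl⟩ := hφ u hu hu2
    exact ⟨a, ha, hu2⟩

theorem DRDominatesAt.map {H : SimpleGraph U} (φ : H ↪g G) {v : U}
    (h : DRDominatesAt H (f ∘ φ) v) : DRDominatesAt G f (φ v) := by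
  obtain ⟨h0, h1⟩ := h
  refine ⟨fun hv => ?_, fun hv => ?_⟩
  · rcases h0 hv with ⟨a, a', haa', ha, ha', ha2, ha'2⟩ | ⟨a, ha, ha3⟩
    · exact Or.inl ⟨φ a, φ a', φ.injective.ne haa', φ.map_adj_iff.mpr ha,
        φ.map_adj_iff.mpr ha', ha2, ha'2⟩
    · exact Or.inr ⟨φ a, φ.map_adj_iff.mpr ha, ha3⟩
  · obtain ⟨a, ha, ha2⟩ := h1 hv
    exact ⟨φ a, φ.map_adj_iff.mpr ha, ha2⟩

theorem gammaDR_eq_of_isDRDF [Fintype V] (hf : IsDRDF G f)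
    (hmin : ∀ g, IsDRDF G g → ∑ v, f v ≤ ∑ v, g v) : gammaDR G = ∑ v, f v :=
  IsLeast.csInf_eq ⟨⟨f, hf, rfl⟩, by rintro _ ⟨g, hg, rfl⟩; exact hmin g hg⟩

end DoubleRoman

section CycleGraphFive

theorem cycleGraph_five_adj_iff {x y : Fin 5} :
    (cycleGraph 5).Adj x y ↔ (x.val + 1) % 5 = y.val ∨ (y.val + 1) % 5 = x.val := by
  revert x y; decide

-- The `Decidable` instance for five nested bounded quantifiers exceeds the default size limit.
set_option synthInstance.maxSize 1000 in
theorem six_le_sum_of_isDRDF_cycleGraph_five {g : Fin 5 → ℕ} (hg : IsDRDF (cycleGraph 5) g) :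
    6 ≤ ∑ x, g x := by
  have key : ∀ a < 4, ∀ b < 4, ∀ c < 4, ∀ d < 4, ∀ e < 4,
      (∀ x, DRDominatesAt (cycleGraph 5) ![a, b, c, d, e] x) → 6 ≤ a + b + c + d + e := by
    decide +kernel
  obtain ⟨hle, hdom⟩ := isDRDF_iff.mp hg
  rw [Fin.sum_univ_five]
  have hlt : ∀ x, g x < 4 := fun x => Nat.lt_succ_of_le (hle x)
  rw [← FinVec.etaExpand_eq g] at hdom
  exact key _ (hlt 0) _ (hlt 1) _ (hlt 2) _ (hlt 3) _ (hlt 4) hdom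

set_option synthInstance.maxSize 1000 in
theorem five_le_sum_of_drDominatesAt_cycleGraph_five {g : Fin 5 → ℕ} (hle : ∀ x, g x ≤ 3)
    (hdom : ∀ x ≠ 0, DRDominatesAt (cycleGraph 5) g x) : 5 ≤ ∑ x, g x := by
  have key : ∀ a < 4, ∀ b < 4, ∀ c < 4, ∀ d < 4, ∀ e < 4,
      (∀ x ≠ 0, DRDominatesAt (cycleGraph 5) ![a, b, c, d, e] x) →
        5 ≤ a + b + c + d + e := by
    decide +kernel
  rw [Fin.sum_univ_five]
  have hlt : ∀ x, g x < 4 := fun x => Nat.lt_succ_of_le (hle x)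
  rw [← FinVec.etaExpand_eq g] at hdom
  exact key _ (hlt 0) _ (hlt 1) _ (hlt 2) _ (hlt 3) _ (hlt 4) hdom

end CycleGraphFive

section GH

variable {W : Type} {G : SimpleGraph W}

def cycleVertex (w : W) (b : Bool) (x : Fin 5) : W ⊕ W × HTail :=
  .inr (w, Equiv.boolProdEquivSum _ (b, x))

@[simp] theorem cycleVertex_false (w : W) (x : Fin 5) : cycleVertex w false x = .inr (w, .inl x) :=
  rfl

@[simp] theorem cycleVertex_true (w : W) (x : Fin 5) : cycleVertex w true x = .inr (w, .inr x) :=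
  rfl

theorem cycleVertex_injective (w : W) (b : Bool) : (cycleVertex w b).Injective :=
  Sum.inr_injective.comp <| (Prod.mk_right_injective w).comp <|
    (Equiv.injective _).comp (Prod.mk_right_injective b)

theorem GH_adj_cycleVertex_iff {w : W} {b : Bool} {x y : Fin 5} :
    (GH G).Adj (cycleVertex w b x) (cycleVertex w b y) ↔ (cycleGraph 5).Adj x y := by
  cases b <;> simp only [cycleVertex_false, cycleVertex_true] <;>
    grind [GH, fromRel_adj, ghR, cycleGraph_five_adj_iff]

variable (G) in
def cycleCopy (w : W) (b : Bool) : cycleGraph 5 ↪g GH G where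
  toFun := cycleVertex w b
  inj' := cycleVertex_injective w b
  map_rel_iff' := GH_adj_cycleVertex_iff

theorem GH_adj_cycleVertex {w : W} {b : Bool} {x : Fin 5} {u : W ⊕ W × HTail}
    (h : (GH G).Adj (cycleVertex w b x) u) :
    (u = .inl w ∧ x = 0) ∨ ∃ y, (cycleGraph 5).Adj x y ∧ cycleVertex w b y = u := by
  cases b <;> simp only [cycleVertex_false, cycleVertex_true] at h ⊢ <;>
    rcases u with a | ⟨w', y | y⟩ <;> grind [GH, fromRel_adj, ghR, cycleGraph_five_adj_iff]

theorem GH_adj_inl_cycleVertex_zero (w : W) (b : Bool) :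
    (GH G).Adj (.inl w) (cycleVertex w b 0) := by
  cases b <;> simp [GH, ghR]

theorem sum_GH_vertices [Fintype W] (f : W ⊕ W × HTail → ℕ) :
    ∑ v, f v = ∑ w, (f (.inl w) + ∑ b, ∑ x, f (cycleVertex w b x)) := by
  rw [Fintype.sum_sum_type, Fintype.sum_prod_type, ← Finset.sum_add_distrib]
  congr! 2 with w
  rw [← Fintype.sum_prod_type', ← (Equiv.boolProdEquivSum _).sum_comp]
  rfl

end GH

section LowerBound

variable {W : Type} {G : SimpleGraph W} {f : W ⊕ W × HTail → ℕ}

theorem twelve_le_of_isDRDF_GH (hf : IsDRDF (GH G) f) (w : W) (b : Bool) :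
    12 ≤ f (.inl w) + 2 * ∑ x, f (cycleVertex w b x) := by
  obtain ⟨hle, hdom⟩ := isDRDF_iff.mp hf
  have hcycle : ∀ x, (x ≠ 0 ∨ f (.inl w) < 2) →
      DRDominatesAt (cycleGraph 5) (f ∘ cycleVertex w b) x := fun x hx =>
    (hdom _).comp fun u hu hu2 => (GH_adj_cycleVertex hu).resolve_left <| by
      rintro ⟨rfl, rfl⟩; omega
  by_cases hw : f (.inl w) < 2
  · have := six_le_sum_of_isDRDF_cycleGraph_five <|
      isDRDF_iff.mpr ⟨fun x => hle _, fun x => hcycle x (.inr hw)⟩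
    omega
  · have := five_le_sum_of_drDominatesAt_cycleGraph_five (fun x => hle _)
      fun x hx => hcycle x (.inl hx)
    omega

theorem twelve_mul_card_le_sum_of_isDRDF_GH [Fintype W] (hf : IsDRDF (GH G) f) :
    12 * Fintype.card W ≤ ∑ v, f v := by
  rw [sum_GH_vertices, mul_comm, ← smul_eq_mul, ← Finset.card_univ]
  refine Finset.card_nsmul_le_sum _ _ 12 fun w _ => ?_
  have h₀ := twelve_le_of_isDRDF_GH hf w false
  have h₁ := twelve_le_of_isDRDF_GH hf w true
  rw [Fintype.sum_bool]
  omega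

end LowerBound

section UpperBound

variable {W : Type}

def cycleHubs : W ⊕ W × HTail → ℕ
  | .inl _ => 0
  | .inr (_, t) => ![3, 0, 3, 0, 0] (Sum.elim id id t)

theorem cycleHubs_cycleVertex (w : W) (b : Bool) (x : Fin 5) :
    cycleHubs (cycleVertex w b x) = ![3, 0, 3, 0, 0] x := by
  cases b <;> rfl

theorem isDRDF_cycleHubs (G : SimpleGraph W) : IsDRDF (GH G) cycleHubs := by
  refine isDRDF_iff.mpr ⟨?_, ?_⟩
  · rintro (_ | ⟨_, t⟩)
    · simp [cycleHubs]
    · exact (by decide : ∀ x : Fin 5, ![3, 0, 3, 0, 0] x ≤ 3) _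
  · rintro (w | ⟨w, t⟩)
    · exact ⟨fun _ => .inr ⟨cycleVertex w false 0, GH_adj_inl_cycleVertex_zero w false, rfl⟩,
        fun h => nomatch h⟩
    · obtain ⟨⟨b, x⟩, rfl⟩ := (Equiv.boolProdEquivSum _).surjective t
      have hcomp : cycleHubs ∘ cycleCopy G w b = ![3, 0, 3, 0, 0] :=
        funext (cycleHubs_cycleVertex w b)
      refine DRDominatesAt.map (cycleCopy G w b) (v := x) ?_
      rw [hcomp]
      revert x; decide

theorem sum_cycleHubs [Fintype W] :
    ∑ v : W ⊕ W × HTail, cycleHubs v = 12 * Fintype.card W := by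
  rw [sum_GH_vertices]
  simp [cycleHubs, Fin.sum_univ_five, mul_comm]

end UpperBound

/-- For every graph `G`, the graph `G_H` has order `n(G_H) = 11·|V(G)|` and satisfies
`γ_dR(G_H) = 12·n(G_H)/11`. -/
theorem gammaDR_GH_eq {W : Type} [Fintype W] (G : SimpleGraph W) :
    Fintype.card (W ⊕ W × HTail) = 11 * Fintype.card W ∧
      (gammaDR (GH G) : ℚ) = 12 * (Fintype.card (W ⊕ W × HTail)) / 11 := by
  have hcard : Fintype.card (W ⊕ W × HTail) = 11 * Fintype.card W := by
    simp only [Fintype.card_sum, Fintype.card_prod, Fintype.card_fin]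
    ring
  have hγ : gammaDR (GH G) = 12 * Fintype.card W := by
    rw [gammaDR_eq_of_isDRDF (isDRDF_cycleHubs G), sum_cycleHubs]
    exact fun f hf => sum_cycleHubs.trans_le (twelve_mul_card_le_sum_of_isDRDF_GH hf)
  refine ⟨hcard, ?_⟩
  rw [hγ, hcard]
  push_cast
  ring
end
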